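/- Weak-L² bound for the Korevaar-Schoen maximal function: for f ∈ KS^{d_w/2,2}(X) and R > 0 define M_R f(x) := sup_{0<ρ<R} ( μ(B(x,ρ))^{-1} liminf_{r→0⁺} E_{d_w/2,B(x,ρ)}(f,r) )^{1/2}. Then there exists C > 0 independent of R and f such that for all λ > 0, μ({x : M_R f(x) > λ}) ≤ C λ^{-2} liminf_{r→0⁺} E_{d_w/2,X}(f,r). -/

import Mathlib

open MeasureTheory Metric Filter Topology

/-- The Korevaar–Schoen energy `E_{d_w/2,U}(f,r)` at scale `r` on `U`. -/
noncomputable def KSE {X : Type*} [MetricSpace X] [MeasurableSpace X]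
    (μ : Measure X) (dw : ℝ) (f : X → ℝ) (U : Set X) (r : ℝ) : ℝ :=
  ∫ x in U, (⨍ y in ball x r, (f y - f x) ^ 2 ∂μ) / r ^ dw ∂μ

open scoped ENNReal

/-!
The superlevel set is covered, by the Vitali covering lemma, by the eightfold enlargements of
countably many disjoint balls `B(x, ρ)` with `λ² μ(B(x, ρ)) < liminf E(B(x, ρ))`, and doubling
gives `μ(B(x, 8ρ)) ≤ C_D³ μ(B(x, ρ))`. The energies of disjoint sets add up to at most the energy
of `X`, and this survives the `liminf`: the energy density is integrable because balls of a fixed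
radius have measure bounded below on a compact space.
-/

theorem sum_liminf_le_liminf {α ι : Type*} {l : Filter α} [l.NeBot] (s : Finset ι)
    {u : ι → α → ℝ} {v : α → ℝ} (hu : ∀ i ∈ s, IsBoundedUnder (· ≥ ·) l (u i))
    (hv : IsCoboundedUnder (· ≥ ·) l v) (huv : ∀ᶠ a in l, ∑ i ∈ s, u i a ≤ v a) :
    ∑ i ∈ s, liminf (u i) l ≤ liminf v l := by
  have hslack : ∀ ε > 0, ∑ i ∈ s, liminf (u i) l - s.card * ε ≤ liminf v l := by
    intro ε hε
    refine le_liminf_of_le hv ?_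
    have hclose : ∀ᶠ a in l, ∀ i ∈ s, liminf (u i) l - ε < u i a :=
      (eventually_all_finset s).2 fun i hi => eventually_lt_of_lt_liminf (by linarith) (hu i hi)
    filter_upwards [hclose, huv] with a ha hav
    calc ∑ i ∈ s, liminf (u i) l - s.card * ε = ∑ i ∈ s, (liminf (u i) l - ε) := by
          rw [Finset.sum_sub_distrib, Finset.sum_const, nsmul_eq_mul]
      _ ≤ ∑ i ∈ s, u i a := Finset.sum_le_sum fun i hi => (ha i hi).le
      _ ≤ v a := hav
  refine le_of_forall_pos_le_add fun ε hε => ?_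
  have hslack' := hslack (ε / (s.card + 1)) (by positivity)
  have hcard : (s.card : ℝ) * (ε / (s.card + 1)) ≤ ε := by
    rw [mul_div_assoc']
    exact div_le_of_le_mul₀ (by positivity) hε.le (by linarith)
  linarith

section Doubling

variable {X : Type*} [PseudoMetricSpace X] [MeasurableSpace X] {μ : Measure X}

theorem measure_ball_two_pow_mul_le {D : ℝ≥0∞}
    (hdouble : ∀ (x : X) (r : ℝ), 0 < r → μ (ball x (2 * r)) ≤ D * μ (ball x r))
    (n : ℕ) (x : X) {r : ℝ} (hr : 0 < r) : μ (ball x (2 ^ n * r)) ≤ D ^ n * μ (ball x r) := by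
  induction n with
  | zero => simp
  | succ n ih =>
    calc μ (ball x (2 ^ (n + 1) * r)) = μ (ball x (2 * (2 ^ n * r))) := by ring_nf
      _ ≤ D * μ (ball x (2 ^ n * r)) := hdouble x _ (by positivity)
      _ ≤ D * (D ^ n * μ (ball x r)) := by gcongr
      _ = D ^ (n + 1) * μ (ball x r) := by ring

theorem measure_le_pow_three_mul_of_disjoint_sum_le [TopologicalSpace.SeparableSpace X]
    {D : ℝ≥0∞} (hdouble : ∀ (x : X) (r : ℝ), 0 < r → μ (ball x (2 * r)) ≤ D * μ (ball x r))
    {E : Set X} {ρ : X → ℝ} {R : ℝ} (hρ : ∀ x ∈ E, 0 < ρ x ∧ ρ x ≤ R) {Φ : X → ℝ≥0∞}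
    (hΦ : ∀ x ∈ E, μ (ball x (ρ x)) ≤ Φ x) {A : ℝ≥0∞}
    (hA : ∀ s : Finset X, ↑s ⊆ E → (s : Set X).PairwiseDisjoint (fun x => ball x (ρ x)) →
      ∑ x ∈ s, Φ x ≤ A) :
    μ E ≤ D ^ 3 * A := by
  obtain ⟨u, huE, hdisj, hcover⟩ :=
    Vitali.exists_disjoint_subfamily_covering_enlargement_closedBall E id ρ R
      (fun x hx => (hρ x hx).2) 4 (by norm_num)
  have hdisj' : u.PairwiseDisjoint fun x => ball x (ρ x) :=
    hdisj.mono fun _ => ball_subset_closedBall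
  have hu : u.Countable :=
    hdisj'.countable_of_isOpen (fun _ _ => isOpen_ball)
      fun x hx => nonempty_ball.2 (hρ x (huE hx)).1
  have hEcover : E ⊆ ⋃ x ∈ u, ball x (2 ^ 3 * ρ x) := by
    intro x hx
    obtain ⟨b, hbu, hxb⟩ := hcover x hx
    refine Set.mem_biUnion hbu (hxb.trans (closedBall_subset_ball ?_) ?_)
    · linarith [(hρ b (huE hbu)).1]
    · exact mem_closedBall_self (hρ x hx).1.le
  have hsum : ∑' x : u, Φ x ≤ A := by
    refine ENNReal.summable.tsum_le_of_sum_le fun s => ?_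
    have hsu : ↑(s.map (Function.Embedding.subtype (· ∈ u))) ⊆ u := by
      intro x hx
      obtain ⟨y, -, rfl⟩ := Finset.mem_map.1 hx
      exact y.2
    simpa using hA _ (hsu.trans huE) (hdisj'.subset hsu)
  calc μ E ≤ μ (⋃ x ∈ u, ball x (2 ^ 3 * ρ x)) := measure_mono hEcover
    _ ≤ ∑' x : u, μ (ball x (2 ^ 3 * ρ x)) := measure_biUnion_le μ hu _
    _ ≤ ∑' x : u, D ^ 3 * Φ x := ENNReal.tsum_le_tsum fun x =>
        (measure_ball_two_pow_mul_le hdouble 3 x (hρ x (huE x.2)).1).trans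
          (mul_le_mul_right (hΦ x (huE x.2)) _)
    _ = D ^ 3 * ∑' x : u, Φ x := ENNReal.tsum_mul_left
    _ ≤ D ^ 3 * A := by gcongr

end Doubling

theorem setAverage_sq_sub_le {X : Type*} [MeasurableSpace X] {μ : Measure X}
    [IsFiniteMeasure μ] {f : X → ℝ} (hf : MemLp f 2 μ) (s : Set X) (a : ℝ) :
    ⨍ y in s, (f y - a) ^ 2 ∂μ ≤ (μ.real s)⁻¹ * ∫ y, 2 * f y ^ 2 ∂μ + 2 * a ^ 2 := by
  have hsq : Integrable (fun y => f y ^ 2) μ := hf.integrable_sq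
  have hle : ∫ y in s, (f y - a) ^ 2 ∂μ ≤ ∫ y, 2 * f y ^ 2 ∂μ + μ.real s * (2 * a ^ 2) :=
    calc ∫ y in s, (f y - a) ^ 2 ∂μ
        ≤ ∫ y in s, (2 * f y ^ 2 + 2 * a ^ 2) ∂μ :=
          setIntegral_mono (hf.sub (memLp_const a)).integrable_sq.integrableOn
            ((hsq.const_mul 2).add (integrable_const _)).integrableOn
            fun y => by nlinarith [sq_nonneg (f y + a)]
      _ = ∫ y in s, 2 * f y ^ 2 ∂μ + μ.real s * (2 * a ^ 2) := by
          rw [integral_add (hsq.const_mul 2).integrableOn (integrable_const _), setIntegral_const,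
            smul_eq_mul]
      _ ≤ ∫ y, 2 * f y ^ 2 ∂μ + μ.real s * (2 * a ^ 2) := by
          gcongr ?_ + _
          exact setIntegral_le_integral (hsq.const_mul 2) (ae_of_all _ fun y => by positivity)
  rcases eq_or_ne (μ.real s) 0 with hs | hs
  · rw [setAverage_eq, hs, inv_zero, zero_smul, zero_mul, zero_add]
    positivity
  calc ⨍ y in s, (f y - a) ^ 2 ∂μ
      ≤ (μ.real s)⁻¹ * (∫ y, 2 * f y ^ 2 ∂μ + μ.real s * (2 * a ^ 2)) := by
        rw [setAverage_eq, smul_eq_mul]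
        gcongr
    _ = (μ.real s)⁻¹ * ∫ y, 2 * f y ^ 2 ∂μ + 2 * a ^ 2 := by
        field_simp

section BallAverage

variable {X : Type*} [PseudoMetricSpace X] [MeasurableSpace X] {μ : Measure X}

theorem exists_pos_le_measureReal_ball [CompactSpace X] [IsFiniteMeasure μ]
    (hpos : ∀ (x : X) (r : ℝ), 0 < r → 0 < μ (ball x r)) {r : ℝ} (hr : 0 < r) :
    ∃ c > 0, ∀ x, c ≤ μ.real (ball x r) := by
  rcases isEmpty_or_nonempty X with _ | ⟨⟨x₀⟩⟩
  · exact ⟨1, one_pos, isEmptyElim⟩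
  obtain ⟨t, -, ht, hcover⟩ :=
    finite_cover_balls_of_compact (isCompact_univ (X := X)) (half_pos hr)
  have hcover' : ∀ x, ∃ y ∈ t, x ∈ ball y (r / 2) :=
    fun x => by simpa using hcover (Set.mem_univ x)
  obtain ⟨y₀, -, hmin⟩ := t.exists_min_image (fun y => μ.real (ball y (r / 2))) ht
    (let ⟨y, hy, _⟩ := hcover' x₀; ⟨y, hy⟩)
  refine ⟨μ.real (ball y₀ (r / 2)),
    ENNReal.toReal_pos (hpos _ _ (half_pos hr)).ne' (measure_ne_top μ _), fun x => ?_⟩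
  obtain ⟨y, hyt, hxy⟩ := hcover' x
  calc μ.real (ball y₀ (r / 2)) ≤ μ.real (ball y (r / 2)) := hmin y hyt
    _ ≤ μ.real (ball x r) := by
      refine measureReal_mono (ball_subset_ball' ?_)
      rw [mem_ball] at hxy
      linarith [dist_comm x y]

theorem MeasureTheory.AEStronglyMeasurable.setAverage_ball [OpensMeasurableSpace X]
    [SecondCountableTopology X] [SFinite μ] {g : X × X → ℝ}
    (hg : AEStronglyMeasurable g (μ.prod μ)) (r : ℝ) :
    AEStronglyMeasurable (fun x => ⨍ y in ball x r, g (x, y) ∂μ) μ := by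
  set S : Set (X × X) := {p | dist p.2 p.1 < r}
  have hS : MeasurableSet S :=
    measurableSet_lt (measurable_dist.comp (measurable_snd.prodMk measurable_fst))
      measurable_const
  have hμ : Measurable fun x => μ (ball x r) := measurable_measure_prodMk_left hS
  have hint : AEStronglyMeasurable (fun x => ∫ y in ball x r, g (x, y) ∂μ) μ := by
    refine (hg.indicator hS).integral_prod_right'.congr (ae_of_all _ fun x => ?_)
    dsimp only
    rw [← integral_indicator measurableSet_ball]
    rfl
  simp only [setAverage_eq, smul_eq_mul]
  exact hμ.ennreal_toReal.inv.aestronglyMeasurable.mul hint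

theorem integrable_average_ball_sq_sub [CompactSpace X] [OpensMeasurableSpace X]
    [IsFiniteMeasure μ] (hpos : ∀ (x : X) (r : ℝ), 0 < r → 0 < μ (ball x r)) {f : X → ℝ}
    (hf : MemLp f 2 μ) {r : ℝ} (hr : 0 < r) :
    Integrable (fun x => ⨍ y in ball x r, (f y - f x) ^ 2 ∂μ) μ := by
  obtain ⟨c, hc, hcμ⟩ := exists_pos_le_measureReal_ball hpos hr
  have hmeas : AEStronglyMeasurable (fun p : X × X => (f p.2 - f p.1) ^ 2) (μ.prod μ) :=
    ((hf.aestronglyMeasurable.comp_quasiMeasurePreserving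
      Measure.quasiMeasurePreserving_snd).sub
        (hf.aestronglyMeasurable.comp_quasiMeasurePreserving
          Measure.quasiMeasurePreserving_fst)).pow 2
  refine Integrable.mono' (g := fun x => c⁻¹ * ∫ y, 2 * f y ^ 2 ∂μ + 2 * f x ^ 2)
    ((integrable_const _).add (hf.integrable_sq.const_mul 2)) (hmeas.setAverage_ball r)
    (ae_of_all _ fun x => ?_)
  rw [Real.norm_of_nonneg (by exact integral_nonneg fun y => sq_nonneg _)]
  refine (setAverage_sq_sub_le hf _ _).trans ?_
  gcongr
  exact hcμ x

end BallAverage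

section KSE

variable {X : Type*} [MetricSpace X] [MeasurableSpace X] {μ : Measure X}

theorem KSE_nonneg (dw : ℝ) (f : X → ℝ) (U : Set X) {r : ℝ} (hr : 0 ≤ r) :
    0 ≤ KSE μ dw f U r :=
  setIntegral_nonneg_of_ae_restrict <| ae_of_all _ fun _ =>
    div_nonneg (integral_nonneg fun _ => sq_nonneg _) (Real.rpow_nonneg hr dw)

theorem sum_KSE_le_KSE_univ [CompactSpace X] [OpensMeasurableSpace X] [IsFiniteMeasure μ]
    (hpos : ∀ (x : X) (r : ℝ), 0 < r → 0 < μ (ball x r)) (dw : ℝ) {f : X → ℝ}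
    (hf : MemLp f 2 μ) {r : ℝ} (hr : 0 < r) {ι : Type*} (s : Finset ι) {U : ι → Set X}
    (hU : ∀ i ∈ s, MeasurableSet (U i)) (hdisj : (s : Set ι).PairwiseDisjoint U) :
    ∑ i ∈ s, KSE μ dw f (U i) r ≤ KSE μ dw f Set.univ r := by
  have hint := (integrable_average_ball_sq_sub hpos hf hr).div_const (r ^ dw)
  calc ∑ i ∈ s, KSE μ dw f (U i) r
      = ∫ x in ⋃ i ∈ s, U i, (⨍ y in ball x r, (f y - f x) ^ 2 ∂μ) / r ^ dw ∂μ :=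
        (integral_biUnion_finset s hU hdisj fun i _ => hint.integrableOn).symm
    _ ≤ ∫ x, (⨍ y in ball x r, (f y - f x) ^ 2 ∂μ) / r ^ dw ∂μ :=
        setIntegral_le_integral hint <| ae_of_all _ fun _ =>
          div_nonneg (integral_nonneg fun _ => sq_nonneg _) (Real.rpow_nonneg hr.le dw)
    _ = KSE μ dw f Set.univ r := setIntegral_univ.symm

theorem sum_liminf_KSE_le_liminf_KSE_univ [CompactSpace X] [OpensMeasurableSpace X]
    [IsFiniteMeasure μ] (hpos : ∀ (x : X) (r : ℝ), 0 < r → 0 < μ (ball x r)) {dw : ℝ}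
    {f : X → ℝ} (hf : MemLp f 2 μ)
    (hbdd : IsBoundedUnder (· ≤ ·) (𝓝[>] (0 : ℝ)) (fun r => KSE μ dw f Set.univ r))
    {ι : Type*} (s : Finset ι) {U : ι → Set X} (hU : ∀ i ∈ s, MeasurableSet (U i))
    (hdisj : (s : Set ι).PairwiseDisjoint U) :
    ∑ i ∈ s, liminf (fun r => KSE μ dw f (U i) r) (𝓝[>] 0) ≤
      liminf (fun r => KSE μ dw f Set.univ r) (𝓝[>] 0) :=
  sum_liminf_le_liminf s
    (fun i _ => isBoundedUnder_of_eventually_ge <|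
      eventually_mem_nhdsWithin.mono fun _ hr => KSE_nonneg dw f (U i) (le_of_lt hr))
    hbdd.isCoboundedUnder_ge
    (eventually_mem_nhdsWithin.mono fun _ hr => sum_KSE_le_KSE_univ hpos dw hf hr s hU hdisj)

end KSE

/-- `{M_R f > λ}` is written out as the set of `x` having a radius `ρ ∈ (0, R)` with
`λ² μ(B(x,ρ)) < liminf_{r→0⁺} E_{d_w/2,B(x,ρ)}(f,r)`. -/
theorem stmt11_general {X : Type*} [MetricSpace X] [MeasurableSpace X] [BorelSpace X]
    [CompactSpace X]
    (μ : Measure X) (CD : ℝ) (hCD : 0 < CD)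
    (hpos : ∀ (x : X) (r : ℝ), 0 < r → 0 < μ (ball x r))
    (hfin : ∀ (x : X) (r : ℝ), 0 < r → μ (ball x r) < ⊤)
    (hdouble : ∀ (x : X) (r : ℝ), 0 < r →
      μ (ball x (2 * r)) ≤ ENNReal.ofReal CD * μ (ball x r))
    (dw : ℝ) :
    ∃ C : ℝ, 0 < C ∧ ∀ f : X → ℝ, MemLp f 2 μ →
      Filter.IsBoundedUnder (· ≤ ·) (𝓝[>] (0 : ℝ)) (fun r => KSE μ dw f Set.univ r) →
      ∀ R l : ℝ, 0 < R → 0 < l →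
        μ {x : X | ∃ ρ : ℝ, 0 < ρ ∧ ρ < R ∧
            l ^ 2 * (μ (ball x ρ)).toReal <
              Filter.liminf (fun r => KSE μ dw f (ball x ρ) r) (𝓝[>] (0 : ℝ))} ≤
          ENNReal.ofReal
            (C * l⁻¹ ^ 2 *
              Filter.liminf (fun r => KSE μ dw f Set.univ r) (𝓝[>] (0 : ℝ))) := by
  have : IsLocallyFiniteMeasure μ :=
    ⟨fun x => ⟨ball x 1, ball_mem_nhds x one_pos, hfin x 1 one_pos⟩⟩
  refine ⟨CD ^ 3, by positivity, fun f hf hbdd R l _ hl => ?_⟩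
  set L : Set X → ℝ := fun U => liminf (fun r => KSE μ dw f U r) (𝓝[>] 0)
  set E := {x : X | ∃ ρ : ℝ, 0 < ρ ∧ ρ < R ∧ l ^ 2 * (μ (ball x ρ)).toReal < L (ball x ρ)}
  choose! ρ hρ0 hρR hlarge using fun x (hx : x ∈ E) => hx
  have hL : ∀ x ∈ E, 0 ≤ L (ball x (ρ x)) :=
    fun x hx => (by positivity : (0 : ℝ) ≤ _).trans (hlarge x hx).le
  have hball : ∀ x ∈ E, μ (ball x (ρ x)) ≤ ENNReal.ofReal (l⁻¹ ^ 2 * L (ball x (ρ x))) := by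
    intro x hx
    rw [← ENNReal.ofReal_toReal (measure_ne_top μ _), inv_pow, inv_mul_eq_div]
    exact ENNReal.ofReal_le_ofReal ((le_div_iff₀ (by positivity)).2 (by linarith [hlarge x hx]))
  have hsum : ∀ s : Finset X, ↑s ⊆ E → (s : Set X).PairwiseDisjoint (fun x => ball x (ρ x)) →
      ∑ x ∈ s, ENNReal.ofReal (l⁻¹ ^ 2 * L (ball x (ρ x))) ≤
        ENNReal.ofReal (l⁻¹ ^ 2 * L Set.univ) := by
    intro s hsE hdisj
    rw [← ENNReal.ofReal_sum_of_nonneg fun x hx => mul_nonneg (by positivity) (hL x (hsE hx)),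
      ← Finset.mul_sum]
    exact ENNReal.ofReal_le_ofReal <| mul_le_mul_of_nonneg_left
      (sum_liminf_KSE_le_liminf_KSE_univ hpos hf hbdd s (fun _ _ => measurableSet_ball) hdisj)
      (by positivity)
  calc μ E ≤ ENNReal.ofReal CD ^ 3 * ENNReal.ofReal (l⁻¹ ^ 2 * L Set.univ) :=
        measure_le_pow_three_mul_of_disjoint_sum_le hdouble
          (fun x hx => ⟨hρ0 x hx, (hρR x hx).le⟩) hball hsum
    _ = _ := by rw [← ENNReal.ofReal_pow hCD.le, ← ENNReal.ofReal_mul (by positivity), mul_assoc]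

/-- weak-`L²` bound for the Korevaar–Schoen maximal function
`M_R f(x) = sup_{0<ρ<R} (μ(B(x,ρ))⁻¹ liminf_{r→0⁺} E_{d_w/2,B(x,ρ)}(f,r))^{1/2}`.
The superlevel set `{M_R f > λ}` is described equivalently by the existence of
a radius `ρ ∈ (0,R)` with `λ² μ(B(x,ρ)) < liminf_{r→0⁺} E_{d_w/2,B(x,ρ)}(f,r)`. -/
theorem stmt11 {X : Type*} [MetricSpace X] [MeasurableSpace X] [BorelSpace X]
    [CompactSpace X]
    (μ : Measure X) (CD : ℝ) (hCD : 0 < CD)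
    (hpos : ∀ (x : X) (r : ℝ), 0 < r → 0 < μ (ball x r))
    (hfin : ∀ (x : X) (r : ℝ), 0 < r → μ (ball x r) < ⊤)
    (hdouble : ∀ (x : X) (r : ℝ), 0 < r →
      μ (ball x (2 * r)) ≤ ENNReal.ofReal CD * μ (ball x r))
    (dw : ℝ) (hdw : 2 < dw) :
    ∃ C : ℝ, 0 < C ∧ ∀ f : X → ℝ, MemLp f 2 μ →
      Filter.IsBoundedUnder (· ≤ ·) (𝓝[>] (0 : ℝ)) (fun r => KSE μ dw f Set.univ r) →
      ∀ R l : ℝ, 0 < R → 0 < l →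
        μ {x : X | ∃ ρ : ℝ, 0 < ρ ∧ ρ < R ∧
            l ^ 2 * (μ (ball x ρ)).toReal <
              Filter.liminf (fun r => KSE μ dw f (ball x ρ) r) (𝓝[>] (0 : ℝ))} ≤
          ENNReal.ofReal
            (C * l⁻¹ ^ 2 *
              Filter.liminf (fun r => KSE μ dw f Set.univ r) (𝓝[>] (0 : ℝ))) :=
  stmt11_general μ CD hCD hpos hfin hdouble dw
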